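/- arXiv:1211.5755 — 2 statements merged into one kernel-verified Lean document; each statement's English description precedes it below -/
import Mathlib

section
/- Let P ⊂ ℝ^N be an integral convex polytope and let h be the maximal degree of an element of the minimal Hilbert basis H(C(P)) of the cone C(P). Then the dilated polytope hP is very ample. In particular μ_va(P) ≤ μ_Hilb(P). -/
open scoped BigOperators Pointwise

/-- Points of `ℝ^N`. -/
abbrev Pt (N : ℕ) := Fin N → ℝ

/-- A point has integer coordinates. -/
def IsLat {N : ℕ} (x : Pt N) : Prop := ∀ i, ∃ z : ℤ, x i = (z : ℝ)

/-- Lattice points of a set. -/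
def latPts {N : ℕ} (P : Set (Pt N)) : Set (Pt N) := {x ∈ P | IsLat x}

/-- The dilated polytope `kP`. -/
def dil {N : ℕ} (k : ℕ) (P : Set (Pt N)) : Set (Pt N) := (k : ℝ) • P

/-- `α` is a sum of `k` lattice points of `P`. -/
def DecomposesIn {N : ℕ} (P : Set (Pt N)) (k : ℕ) (α : Pt N) : Prop :=
  ∃ f : Fin k → Pt N, (∀ i, f i ∈ latPts P) ∧ α = ∑ i, f i

/-- The integer decomposition property. -/
def HasIDP {N : ℕ} (P : Set (Pt N)) : Prop :=
  ∀ k : ℕ, 0 < k → ∀ α ∈ latPts (dil k P), DecomposesIn P k α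

/-- Very ampleness: decomposition holds for all sufficiently large `k`. -/
def VeryAmple {N : ℕ} (P : Set (Pt N)) : Prop :=
  ∃ k₀ : ℕ, ∀ k, k₀ ≤ k → ∀ α ∈ latPts (dil k P), DecomposesIn P k α

/-- An integral convex polytope: the convex hull of finitely many lattice points
(which include all its vertices). -/
def IsIntegralPolytope {N : ℕ} (P : Set (Pt N)) : Prop :=
  ∃ V : Finset (Pt N), (∀ v ∈ V, IsLat v) ∧ P = convexHull ℝ (V : Set (Pt N))

/-- Dimension of a polytope: the rank of the direction of its affine span. -/
noncomputable def polyDim {N : ℕ} (P : Set (Pt N)) : ℕ :=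
  Module.finrank ℝ (affineSpan ℝ P).direction

/-- Lattice points of the cone `C(P) ⊂ ℝ^{N+1}` generated by `P̃ = P × {1}`;
a point of `ℝ^{N+1}` is represented as a pair `(x, deg)`. -/
def coneLat {N : ℕ} (P : Set (Pt N)) : Set (Pt N × ℝ) :=
  {p | (∃ (m : ℕ) (c : Fin m → ℝ) (w : Fin m → Pt N),
        (∀ i, 0 ≤ c i ∧ w i ∈ P) ∧ p.1 = ∑ i, c i • w i ∧ p.2 = ∑ i, c i)
    ∧ IsLat p.1 ∧ ∃ z : ℤ, p.2 = (z : ℝ)}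

/-- The monoid `ℤ_{≥0}(P̃ ∩ ℤ^{N+1})` generated by the degree-one lattice points of the cone. -/
def genMonoid {N : ℕ} (P : Set (Pt N)) : Set (Pt N × ℝ) :=
  {p | ∃ (m : ℕ) (f : Fin m → Pt N), (∀ i, f i ∈ latPts P) ∧
        p.1 = ∑ i, f i ∧ p.2 = (m : ℝ)}

/-- `H` is the minimal Hilbert basis of the cone `C(P)`. -/
def IsMinHilbertBasis {N : ℕ} (P : Set (Pt N)) (H : Set (Pt N × ℝ)) : Prop :=
  (H.Finite ∧ H ⊆ coneLat P ∧
      coneLat P ⊆ (AddSubmonoid.closure H : Set (Pt N × ℝ))) ∧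
  ∀ H' : Set (Pt N × ℝ),
    (H'.Finite ∧ H' ⊆ coneLat P ∧
      coneLat P ⊆ (AddSubmonoid.closure H' : Set (Pt N × ℝ))) → H ⊆ H'

/-- `v` lists the vertices of an empty `d`-simplex contained in `P`. -/
def EmptySimplexIn {N : ℕ} (P : Set (Pt N)) (d : ℕ) (v : Fin (d+1) → Pt N) : Prop :=
  (∀ i, v i ∈ latPts P) ∧ AffineIndependent ℝ v ∧
    ∀ x ∈ convexHull ℝ (Set.range v), IsLat x → x ∈ Set.range v

/-- `Box(S)` of a simplex with vertex list `v`: lattice points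
`Σ rᵢ (vᵢ, 1)` with `0 ≤ rᵢ < 1`. -/
def boxSimplex {N d : ℕ} (v : Fin (d+1) → Pt N) : Set (Pt N × ℝ) :=
  {p | ∃ r : Fin (d+1) → ℝ, (∀ i, 0 ≤ r i ∧ r i < 1) ∧
      p.1 = ∑ i, r i • v i ∧ p.2 = ∑ i, r i ∧ IsLat p.1 ∧ ∃ z : ℤ, p.2 = (z : ℝ)}

/-- `Box(P)`: holes of `P`, i.e. box points of empty `d`-simplices in `P` that are not
nonnegative integer combinations of `P̃ ∩ ℤ^{N+1}`. -/
def boxP {N : ℕ} (P : Set (Pt N)) (d : ℕ) : Set (Pt N × ℝ) :=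
  (⋃ v ∈ {v : Fin (d+1) → Pt N | EmptySimplexIn P d v}, boxSimplex v) \ genMonoid P

/-- Ehrhart counting function `|nP ∩ ℤ^N|`. -/
noncomputable def ehr {N : ℕ} (P : Set (Pt N)) (n : ℕ) : ℕ := (latPts (dil n P)).ncard

/-- The `δ`-vector of a `d`-dimensional polytope, via finite differences of the
Ehrhart counting function. -/
noncomputable def deltaVec {N : ℕ} (P : Set (Pt N)) (d i : ℕ) : ℤ :=
  ∑ j ∈ Finset.range (i+1), (-1)^j * ((d+1).choose j) * (ehr P (i - j) : ℤ)


section AuxHilb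

variable {N : ℕ}

lemma isLat_zero : IsLat (0 : Pt N) := fun _ => ⟨0, by simp⟩

lemma isLat_add {x y : Pt N} (hx : IsLat x) (hy : IsLat y) : IsLat (x + y) := by
  intro i
  obtain ⟨a, ha⟩ := hx i
  obtain ⟨b, hb⟩ := hy i
  exact ⟨a + b, by simp [ha, hb]⟩

lemma isLat_neg {x : Pt N} (hx : IsLat x) : IsLat (-x) := by
  intro i
  obtain ⟨a, ha⟩ := hx i
  exact ⟨-a, by simp [ha]⟩

lemma isLat_nsmul {x : Pt N} (hx : IsLat x) (n : ℕ) : IsLat ((n : ℝ) • x) := by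
  intro i
  obtain ⟨a, ha⟩ := hx i
  refine ⟨n * a, ?_⟩
  rw [Pi.smul_apply, smul_eq_mul, ha]
  push_cast
  ring

lemma isLat_finsetSum {ι : Type*} (s : Finset ι) (g : ι → Pt N)
    (hg : ∀ i ∈ s, IsLat (g i)) : IsLat (∑ i ∈ s, g i) :=
  Finset.sum_induction g IsLat (fun _ _ ha hb => isLat_add ha hb) isLat_zero hg

lemma coneLat_zero (P : Set (Pt N)) : (0 : Pt N × ℝ) ∈ coneLat P := by
  refine ⟨⟨0, Fin.elim0, Fin.elim0, fun i => i.elim0, by simp, by simp⟩, isLat_zero, 0, by simp⟩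

lemma coneLat_add {P : Set (Pt N)} {p q : Pt N × ℝ}
    (hp : p ∈ coneLat P) (hq : q ∈ coneLat P) : p + q ∈ coneLat P := by
  obtain ⟨⟨m₁, c₁, w₁, hcw₁, h11, h12⟩, hl₁, z₁, hz₁⟩ := hp
  obtain ⟨⟨m₂, c₂, w₂, hcw₂, h21, h22⟩, hl₂, z₂, hz₂⟩ := hq
  refine ⟨⟨m₁ + m₂, Fin.addCases c₁ c₂, Fin.addCases w₁ w₂, ?_, ?_, ?_⟩,
    isLat_add hl₁ hl₂, z₁ + z₂, by rw [Prod.snd_add, hz₁, hz₂]; push_cast; ring⟩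
  · intro i
    refine Fin.addCases (fun j => ?_) (fun j => ?_) i
    · simpa using hcw₁ j
    · simpa using hcw₂ j
  · rw [Prod.fst_add, Fin.sum_univ_add]
    simp only [Fin.addCases_left, Fin.addCases_right, h11, h21]
  · rw [Prod.snd_add, Fin.sum_univ_add]
    simp only [Fin.addCases_left, Fin.addCases_right, h12, h22]

lemma coneLat_listSum {P : Set (Pt N)} :
    ∀ l : List (Pt N × ℝ), (∀ x ∈ l, x ∈ coneLat P) → l.sum ∈ coneLat P
  | [], _ => by simpa using coneLat_zero P
  | x :: l, hl => by
    rw [List.sum_cons]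
    exact coneLat_add (hl x (by simp))
      (coneLat_listSum l (fun y hy => hl y (by simp [hy])))

lemma coneLat_unit {P : Set (Pt N)} {w : Pt N} (hw : w ∈ P) (hlat : IsLat w) :
    ((w, (1 : ℝ)) : Pt N × ℝ) ∈ coneLat P := by
  refine ⟨⟨1, fun _ => 1, fun _ => w, fun _ => ⟨zero_le_one, hw⟩, by simp, by simp⟩,
    hlat, 1, by simp⟩

lemma sum_snd_ones :
    ∀ l : List (Pt N × ℝ), (∀ x ∈ l, x.2 = (1 : ℝ)) → l.sum.2 = l.length
  | [], _ => by simp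
  | x :: l, hl => by
    have ih := sum_snd_ones l (fun y hy => hl y (by simp [hy]))
    rw [List.sum_cons, Prod.snd_add, ih, hl x (by simp), List.length_cons]
    push_cast
    ring

lemma sum_snd_le (h : ℕ) :
    ∀ l : List (Pt N × ℝ), (∀ x ∈ l, x.2 ≤ (h : ℝ)) → l.sum.2 ≤ (l.length : ℝ) * h
  | [], _ => by simp
  | x :: l, hl => by
    have ih := sum_snd_le h l (fun y hy => hl y (by simp [hy]))
    have hx := hl x (by simp)
    rw [List.sum_cons, Prod.snd_add, List.length_cons]
    push_cast
    nlinarith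

lemma sum_snd_ge_length :
    ∀ l : List (Pt N × ℝ), (∀ x ∈ l, (1 : ℝ) ≤ x.2) → (l.length : ℝ) ≤ l.sum.2
  | [], _ => by simp
  | x :: l, hl => by
    have ih := sum_snd_ge_length l (fun y hy => hl y (by simp [hy]))
    have hx := hl x (by simp)
    rw [List.sum_cons, Prod.snd_add, List.length_cons]
    push_cast
    linarith

/-- Key grouping lemma: a list `lb` of cone lattice points of degrees (integers)
between `1` and `h`, together with a list `lo` of degree-one cone lattice points,
with total degree `k * h` and `lb.length ≤ k`, can be regrouped into exactly `k`
cone lattice points of degree `h`. -/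
lemma main_group {N : ℕ} (P : Set (Pt N)) (h : ℕ) (hh : 1 ≤ h) :
    ∀ (k : ℕ) (lb lo : List (Pt N × ℝ)),
    (∀ x ∈ lb, x ∈ coneLat P ∧ ∃ n : ℕ, 1 ≤ n ∧ n ≤ h ∧ x.2 = (n : ℝ)) →
    (∀ x ∈ lo, x ∈ coneLat P ∧ x.2 = 1) →
    lb.length ≤ k →
    lb.sum.2 + lo.sum.2 = ((k * h : ℕ) : ℝ) →
    ∃ f : Fin k → Pt N × ℝ, (∀ i, f i ∈ coneLat P ∧ (f i).2 = (h : ℝ)) ∧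
      (∑ i, f i) = lb.sum + lo.sum := by
  intro k
  induction k with
  | zero =>
    intro lb lo hlb hlo hlen hdeg
    have hlb0 : lb = [] := List.length_eq_zero_iff.mp (Nat.le_zero.mp hlen)
    subst hlb0
    have h1 : lo.sum.2 = lo.length := sum_snd_ones lo (fun x hx => (hlo x hx).2)
    have h2 : (lo.length : ℝ) = 0 := by
      rw [← h1]
      simpa using hdeg
    have hlo0 : lo = [] := List.length_eq_zero_iff.mp (by exact_mod_cast h2)
    subst hlo0
    exact ⟨fun i => i.elim0, fun i => i.elim0, by simp⟩
  | succ k ih =>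
    intro lb lo hlb hlo hlen hdeg
    have hloones : ∀ x ∈ lo, x.2 = (1 : ℝ) := fun x hx => (hlo x hx).2
    have hlolen : lo.sum.2 = lo.length := sum_snd_ones lo hloones
    cases lb with
    | nil =>
      have hlen_lo : ((k + 1) * h : ℕ) ≤ lo.length := by
        have : (lo.length : ℝ) = (((k+1) * h : ℕ) : ℝ) := by
          rw [← hlolen]
          simpa using hdeg
        exact_mod_cast this.ge
      have hhle : h ≤ lo.length := le_trans (by nlinarith) hlen_lo
      have htake_len : (lo.take h).length = h := by
        rw [List.length_take]
        omega
      have htake_mem : ∀ x ∈ lo.take h, x ∈ lo := fun x hx => List.take_subset h lo hx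
      have hdrop_mem : ∀ x ∈ lo.drop h, x ∈ lo := fun x hx => List.drop_subset h lo hx
      have hsplit : (lo.take h).sum + (lo.drop h).sum = lo.sum := by
        rw [← List.sum_append, List.take_append_drop]
      have htake2 : (lo.take h).sum.2 = (h : ℝ) := by
        rw [sum_snd_ones _ (fun x hx => hloones x (htake_mem x hx)), htake_len]
      have hdeg' : ([] : List (Pt N × ℝ)).sum.2 + (lo.drop h).sum.2 = ((k * h : ℕ) : ℝ) := by
        have hd : (lo.drop h).sum.2 = lo.sum.2 - (h : ℝ) := by
          have h9 := congrArg Prod.snd hsplit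
          simp only [Prod.snd_add] at h9
          rw [htake2] at h9
          linarith
        have h0 : lo.sum.2 = (((k+1) * h : ℕ) : ℝ) := by simpa using hdeg
        rw [hd, h0]
        simp only [List.sum_nil, Prod.snd_zero, zero_add]
        push_cast
        ring
      obtain ⟨f', hf'prop, hf'sum⟩ := ih [] (lo.drop h) (by simp)
        (fun x hx => hlo x (hdrop_mem x hx)) (by simp) hdeg'
      · refine ⟨Fin.cons ((lo.take h).sum) f', ?_, ?_⟩
        · intro i
          refine Fin.cases ?_ (fun j => by simpa using hf'prop j) i
          simp only [Fin.cons_zero]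
          exact ⟨coneLat_listSum _ (fun x hx => (hlo x (htake_mem x hx)).1), htake2⟩
        · rw [Fin.sum_cons, hf'sum]
          simp only [List.sum_nil, zero_add]
          exact hsplit
    | cons b lb' =>
      obtain ⟨hbcone, n, hn1, hnh, hb2⟩ := hlb b (by simp)
      have hlb' : ∀ x ∈ lb', x ∈ coneLat P ∧ ∃ n : ℕ, 1 ≤ n ∧ n ≤ h ∧ x.2 = (n : ℝ) :=
        fun x hx => hlb x (by simp [hx])
      have hlen' : lb'.length ≤ k := by
        simpa using Nat.succ_le_succ_iff.mp (by simpa using hlen)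
      have hlb'le : lb'.sum.2 ≤ (lb'.length : ℝ) * h := by
        refine sum_snd_le h lb' (fun x hx => ?_)
        obtain ⟨-, m, hm1, hmh, hx2⟩ := hlb' x hx
        rw [hx2]
        exact_mod_cast hmh
      have hlbsum2 : (b :: lb').sum.2 = (n : ℝ) + lb'.sum.2 := by
        rw [List.sum_cons, Prod.snd_add, hb2]
      have hc_le_lo : (h - n : ℕ) ≤ lo.length := by
        have hreal : ((h : ℝ) - n) ≤ (lo.length : ℝ) := by
          have h0 : ((n : ℝ) + lb'.sum.2) + (lo.length : ℝ) = (((k+1) * h : ℕ) : ℝ) := by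
            rw [← hlolen, ← hlbsum2]
            exact hdeg
          have hk : (lb'.length : ℝ) * h ≤ (k : ℝ) * h := by
            have : (lb'.length : ℝ) ≤ (k : ℝ) := by exact_mod_cast hlen'
            nlinarith [Nat.cast_nonneg (α := ℝ) h]
          push_cast at h0 ⊢
          nlinarith
        have : ((h - n : ℕ) : ℝ) ≤ (lo.length : ℝ) := by
          rw [Nat.cast_sub hnh]
          exact hreal
        exact_mod_cast this
      set c : ℕ := h - n with hc
      have htake_len : (lo.take c).length = c := by
        rw [List.length_take]
        omega
      have htake_mem : ∀ x ∈ lo.take c, x ∈ lo := fun x hx => List.take_subset c lo hx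
      have hdrop_mem : ∀ x ∈ lo.drop c, x ∈ lo := fun x hx => List.drop_subset c lo hx
      have hsplit : (lo.take c).sum + (lo.drop c).sum = lo.sum := by
        rw [← List.sum_append, List.take_append_drop]
      have htake2 : (lo.take c).sum.2 = (c : ℝ) := by
        rw [sum_snd_ones _ (fun x hx => hloones x (htake_mem x hx)), htake_len]
      have hcn : (c : ℝ) = (h : ℝ) - n := by
        rw [hc]
        push_cast [Nat.cast_sub hnh]
        ring
      have hdeg' : lb'.sum.2 + (lo.drop c).sum.2 = ((k * h : ℕ) : ℝ) := by
        have hdrop2 : (lo.drop c).sum.2 = lo.sum.2 - (c : ℝ) := by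
          have h9 := congrArg Prod.snd hsplit
          simp only [Prod.snd_add] at h9
          rw [htake2] at h9
          linarith
        have h0 : ((n : ℝ) + lb'.sum.2) + lo.sum.2 = (((k+1) * h : ℕ) : ℝ) := by
          rw [← hlbsum2]
          exact hdeg
        rw [hdrop2, hcn]
        push_cast at h0 ⊢
        linarith
      obtain ⟨f', hf'prop, hf'sum⟩ := ih lb' (lo.drop c) hlb'
        (fun x hx => hlo x (hdrop_mem x hx)) hlen' hdeg'
      · refine ⟨Fin.cons (b + (lo.take c).sum) f', ?_, ?_⟩
        · intro i
          refine Fin.cases ?_ (fun j => by simpa using hf'prop j) i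
          simp only [Fin.cons_zero]
          constructor
          · exact coneLat_add hbcone
              (coneLat_listSum _ (fun x hx => (hlo x (htake_mem x hx)).1))
          · rw [Prod.snd_add, hb2, htake2, hcn]
            ring
        · rw [Fin.sum_cons, hf'sum, List.sum_cons]
          rw [← hsplit]
          abel

/-- A cone lattice point of degree `h ≥ 1` is a lattice point of `hP`
(when `P` is convex). -/
lemma coneLat_slice {N : ℕ} {P : Set (Pt N)} (hconv : Convex ℝ P) {h : ℕ}
    (hh : 1 ≤ h) {γ : Pt N × ℝ} (hγ : γ ∈ coneLat P) (hγ2 : γ.2 = (h : ℝ)) :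
    γ.1 ∈ latPts (dil h P) := by
  obtain ⟨⟨m, cc, w, hcw, h1, h2⟩, hlat, -⟩ := hγ
  have hhpos : (0 : ℝ) < h := by exact_mod_cast hh
  have hx : (h : ℝ)⁻¹ • γ.1 ∈ P := by
    rw [h1, Finset.smul_sum]
    simp_rw [smul_smul]
    refine hconv.sum_mem (fun i _ => mul_nonneg (by positivity) (hcw i).1) ?_
      (fun i _ => (hcw i).2)
    rw [← Finset.mul_sum, ← h2, hγ2]
    field_simp
  refine ⟨⟨(h : ℝ)⁻¹ • γ.1, hx, ?_⟩, hlat⟩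
  show (h : ℝ) • ((h : ℝ)⁻¹ • γ.1) = γ.1
  exact smul_inv_smul₀ (ne_of_gt hhpos) _

lemma sum_flatMap_replicate {α M : Type*} [AddCommMonoid M] (g : α → M) (n : α → ℕ) :
    ∀ l : List α,
      (l.flatMap fun a => List.replicate (n a) (g a)).sum = (l.map fun a => n a • g a).sum
  | [] => by simp
  | a :: l => by
    simp only [List.flatMap_cons, List.sum_append, List.sum_replicate, List.map_cons,
      List.sum_cons, sum_flatMap_replicate g n l]

end AuxHilb

/-- if `h` is the maximal degree of an element of the minimal Hilbert
basis of `C(P)`, then `hP` is very ample; in particular `μ_va(P) ≤ μ_Hilb(P)`. -/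
theorem hilb_dilate_veryAmple {N : ℕ} (P : Set (Pt N))
    (hP : IsIntegralPolytope P)
    (H : Set (Pt N × ℝ)) (hH : IsMinHilbertBasis P H)
    (h : ℕ) (hmax : IsGreatest {t : ℝ | ∃ p ∈ H, p.2 = t} (h : ℝ)) :
    VeryAmple (dil h P) := by
  classical
  obtain ⟨V, hVlat, hPV⟩ := hP
  obtain ⟨⟨Hfin, Hsub, Hgen⟩, Hmin⟩ := hH
  -- `0` is not a member of the minimal Hilbert basis
  have hcl : coneLat P ⊆ (AddSubmonoid.closure (H \ {0}) : Set (Pt N × ℝ)) := by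
    intro x hx
    have hle : AddSubmonoid.closure H ≤ AddSubmonoid.closure (H \ {0}) := by
      rw [AddSubmonoid.closure_le]
      intro y hy
      by_cases hy0 : y = 0
      · subst hy0
        exact AddSubmonoid.zero_mem _
      · exact AddSubmonoid.subset_closure ⟨hy, hy0⟩
    exact hle (Hgen hx)
  have h0notH : (0 : Pt N × ℝ) ∉ H := by
    intro h0
    exact (Hmin (H \ {0})
      ⟨Hfin.subset Set.diff_subset, Set.diff_subset.trans Hsub, hcl⟩ h0).2 rfl
  -- every element of `H` has degree a positive integer at most `h`
  have hHdeg : ∀ p ∈ H, ∃ n : ℕ, 1 ≤ n ∧ n ≤ h ∧ p.2 = (n : ℝ) := by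
    intro p hp
    obtain ⟨⟨m, c, w, hcw, hp1, hp2⟩, hplat, z, hz⟩ := Hsub hp
    have hz0 : (0 : ℝ) ≤ p.2 := by
      rw [hp2]
      exact Finset.sum_nonneg fun i _ => (hcw i).1
    have hzle : p.2 ≤ (h : ℝ) := hmax.2 ⟨p, hp, rfl⟩
    have hpne : p.2 ≠ 0 := by
      intro h0
      have hc0 := (Finset.sum_eq_zero_iff_of_nonneg
        (fun i (_ : i ∈ Finset.univ) => (hcw i).1)).mp (by rw [← hp2, h0])
      have hp10 : p.1 = 0 := by
        rw [hp1]
        exact Finset.sum_eq_zero fun i _ => by rw [hc0 i (Finset.mem_univ i), zero_smul]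
      have hpz : p = 0 := Prod.ext hp10 h0
      exact h0notH (hpz ▸ hp)
    have hz0' : (0 : ℤ) ≤ z := by
      have : (0 : ℝ) ≤ (z : ℝ) := hz ▸ hz0
      exact_mod_cast this
    have hzz : z ≠ 0 := by
      intro hzz
      exact hpne (by rw [hz, hzz]; norm_num)
    have hzh : z ≤ (h : ℤ) := by
      have : (z : ℝ) ≤ (h : ℝ) := hz ▸ hzle
      exact_mod_cast this
    refine ⟨z.toNat, by omega, by omega, ?_⟩
    rw [hz]
    congr 1
    omega
  -- `h ≥ 1`
  obtain ⟨p₀, hp₀H, hp₀2⟩ := hmax.1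
  obtain ⟨n₀, hn₀1, hn₀h, -⟩ := hHdeg p₀ hp₀H
  have hh1 : 1 ≤ h := hn₀1.trans hn₀h
  have hVP : ∀ w ∈ V, w ∈ P := fun w hw => by
    rw [hPV]
    exact subset_convexHull ℝ (V : Set (Pt N)) (Finset.mem_coe.mpr hw)
  have hconv : Convex ℝ P := hPV ▸ convex_convexHull ℝ _
  refine ⟨V.card + 1, fun k hk α hα => ?_⟩
  obtain ⟨hαmem, hαlat⟩ := hα
  simp only [dil] at hαmem
  obtain ⟨y, hy, hky⟩ := Set.mem_smul_set.mp hαmem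
  obtain ⟨x, hxP, hhx⟩ := Set.mem_smul_set.mp hy
  have hαx : α = ((k * h : ℕ) : ℝ) • x := by
    rw [← hky, ← hhx, smul_smul]
    norm_cast
  set khR : ℝ := ((k * h : ℕ) : ℝ) with hkhR
  rw [hPV] at hxP
  obtain ⟨t, ht0, ht1, hcm⟩ := Finset.mem_convexHull.mp hxP
  have hxsum : x = ∑ w ∈ V, t w • w := by
    rw [← hcm, Finset.centerMass_eq_of_sum_1 _ _ ht1]
    rfl
  set sw : Pt N → ℕ := fun w => ⌊khR * t w⌋₊ with hsw
  have hkh0 : (0 : ℝ) ≤ khR := Nat.cast_nonneg _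
  have hsle : ∀ w ∈ V, (sw w : ℝ) ≤ khR * t w :=
    fun w hw => Nat.floor_le (mul_nonneg hkh0 (ht0 w hw))
  have hslt : ∀ w, khR * t w < sw w + 1 := fun w => Nat.lt_floor_add_one _
  set S : ℕ := ∑ w ∈ V, sw w with hS
  have hcastS : (S : ℝ) = ∑ w ∈ V, (sw w : ℝ) := by
    rw [hS]
    push_cast
    rfl
  have hsumtw : ∑ w ∈ V, khR * t w = khR := by
    rw [← Finset.mul_sum, ht1, mul_one]
  have hSle : (S : ℝ) ≤ khR := by
    rw [hcastS, ← hsumtw]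
    exact Finset.sum_le_sum hsle
  have hSnat : S ≤ k * h := by
    rw [hkhR] at hSle
    exact_mod_cast hSle
  set D : ℕ := k * h - S with hD
  have hDR : (D : ℝ) = khR - S := by
    rw [hD, Nat.cast_sub hSnat, hkhR]
  have hDsum : (D : ℝ) = ∑ w ∈ V, (khR * t w - (sw w : ℝ)) := by
    rw [Finset.sum_sub_distrib, hsumtw, hDR, hcastS]
  have hDcard : D ≤ V.card := by
    have hr : (D : ℝ) ≤ (V.card : ℝ) := by
      rw [hDsum]
      calc ∑ w ∈ V, (khR * t w - (sw w : ℝ)) ≤ ∑ _w ∈ V, (1 : ℝ) :=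
            Finset.sum_le_sum (fun w _ => by have := hslt w; linarith)
        _ = V.card := by simp
    exact_mod_cast hr
  set β : Pt N := α - ∑ w ∈ V, (sw w : ℝ) • w with hβ
  have hβlat : IsLat β := by
    rw [hβ, sub_eq_add_neg]
    exact isLat_add hαlat (isLat_neg (isLat_finsetSum V _
      (fun w hw => isLat_nsmul (hVlat w hw) (sw w))))
  have hβsum : β = ∑ w ∈ V, (khR * t w - (sw w : ℝ)) • w := by
    have hα2 : α = ∑ w ∈ V, (khR * t w) • w := by
      rw [hαx, hxsum, Finset.smul_sum]
      exact Finset.sum_congr rfl fun w _ => smul_smul khR (t w) w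
    rw [hβ, hα2, ← Finset.sum_sub_distrib]
    exact Finset.sum_congr rfl fun w _ => (sub_smul _ _ w).symm
  have hβcone : ((β, (D : ℝ)) : Pt N × ℝ) ∈ coneLat P := by
    refine ⟨⟨V.card,
      fun i => khR * t ((V.equivFin.symm i : Pt N)) - (sw ((V.equivFin.symm i : Pt N)) : ℝ),
      fun i => (V.equivFin.symm i : Pt N),
      fun i => ⟨by
        have h5 := hsle _ (V.equivFin.symm i).2
        show (0 : ℝ) ≤ khR * t ((V.equivFin.symm i : Pt N)) - (sw ((V.equivFin.symm i : Pt N)) : ℝ)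
        linarith,
        hVP _ (V.equivFin.symm i).2⟩, ?_, ?_⟩, hβlat, (D : ℤ), by push_cast; rfl⟩
    · show β = _
      rw [hβsum, ← Finset.sum_coe_sort V (fun w => (khR * t w - (sw w : ℝ)) • w)]
      exact (Equiv.sum_comp V.equivFin.symm
        fun v : {x // x ∈ V} => (khR * t (v : Pt N) - (sw (v : Pt N) : ℝ)) • (v : Pt N)).symm
    · show (D : ℝ) = _
      rw [hDsum, ← Finset.sum_coe_sort V (fun w => khR * t w - (sw w : ℝ))]
      exact (Equiv.sum_comp V.equivFin.symm
        fun v : {x // x ∈ V} => khR * t (v : Pt N) - (sw (v : Pt N) : ℝ)).symm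
  obtain ⟨lb, hlbH, hlbsum⟩ := AddSubmonoid.exists_list_of_mem_closure (Hgen hβcone)
  have hlbprop : ∀ x ∈ lb, x ∈ coneLat P ∧ ∃ n : ℕ, 1 ≤ n ∧ n ≤ h ∧ x.2 = (n : ℝ) :=
    fun x hx => ⟨Hsub (hlbH x hx), hHdeg x (hlbH x hx)⟩
  have hlblen : lb.length ≤ k := by
    have h1 : (lb.length : ℝ) ≤ lb.sum.2 := sum_snd_ge_length lb (fun x hx => by
      obtain ⟨-, n, hn1, -, hx2⟩ := hlbprop x hx
      rw [hx2]
      exact_mod_cast hn1)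
    have h2 : lb.sum.2 = (D : ℝ) := by rw [hlbsum]
    have h3 : lb.length ≤ D := by exact_mod_cast h1.trans_eq h2
    omega
  set lo : List (Pt N × ℝ) :=
    V.toList.flatMap (fun w => List.replicate (sw w) ((w, (1 : ℝ)) : Pt N × ℝ)) with hlo
  have hlomem : ∀ x ∈ lo, ∃ w ∈ V, x = ((w, (1 : ℝ)) : Pt N × ℝ) := by
    intro x hx
    rw [hlo, List.mem_flatMap] at hx
    obtain ⟨w, hw, hx⟩ := hx
    exact ⟨w, by simpa using hw, List.eq_of_mem_replicate hx⟩
  have hloprop : ∀ x ∈ lo, x ∈ coneLat P ∧ x.2 = 1 := by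
    intro x hx
    obtain ⟨w, hw, rfl⟩ := hlomem x hx
    exact ⟨coneLat_unit (hVP w hw) (hVlat w hw), rfl⟩
  have hlosum : lo.sum = ∑ w ∈ V, sw w • ((w, (1 : ℝ)) : Pt N × ℝ) := by
    rw [hlo, sum_flatMap_replicate, Finset.sum_map_toList]
  have hlosum' : lo.sum = ((∑ w ∈ V, (sw w : ℝ) • w, (S : ℝ)) : Pt N × ℝ) := by
    rw [hlosum]
    refine Prod.ext ?_ ?_
    · rw [Prod.fst_sum]
      exact Finset.sum_congr rfl fun w _ => by
        rw [← Nat.cast_smul_eq_nsmul ℝ]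
        rfl
    · rw [Prod.snd_sum, hcastS]
      refine Finset.sum_congr rfl fun w _ => ?_
      rw [← Nat.cast_smul_eq_nsmul ℝ]
      show (sw w : ℝ) • (1 : ℝ) = _
      rw [smul_eq_mul, mul_one]
  have hdegsum : lb.sum.2 + lo.sum.2 = ((k * h : ℕ) : ℝ) := by
    rw [hlbsum, hlosum']
    show (D : ℝ) + (S : ℝ) = khR
    rw [hDR]
    ring
  obtain ⟨f, hfprop, hfsum⟩ := main_group P h hh1 k lb lo hlbprop hloprop hlblen hdegsum
  have hαsum : ((α, khR) : Pt N × ℝ) = lb.sum + lo.sum := by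
    rw [hlbsum, hlosum']
    refine Prod.ext ?_ ?_
    · show α = β + ∑ w ∈ V, (sw w : ℝ) • w
      rw [hβ]
      abel
    · show khR = (D : ℝ) + (S : ℝ)
      rw [hDR]
      ring
  refine ⟨fun i => (f i).1, fun i => ?_, ?_⟩
  · exact coneLat_slice hconv hh1 (hfprop i).1 (hfprop i).2
  · have h6 := congrArg Prod.fst (hfsum.trans hαsum.symm)
    rw [Prod.fst_sum] at h6
    exact h6.symm
end

section
/- For any integral convex polytope P, the maximal degree of an element of the minimal Hilbert basis H(C(P)) is at most the maximal degree of an element of Box(P) ∪ (P̃ ∩ ℤ^{N+1}); that is, μ_Hilb(P) ≤ max(μ_hole(P), 1). -/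
/-!
Every nonzero lattice point `p` of the cone `C(P)` lies over a point of `P`, and that point lies
in an empty lattice simplex `S ⊆ P` of full dimension: extend a Carathéodory simplex to full
dimension by lattice points of `P`, then, while the simplex contains a further lattice point,
pivot it in for a vertex; this strictly decreases the number of lattice points in the simplex.
Writing `p = ∑ cᵢ (vᵢ, 1)` over the vertices of `S` and splitting each `cᵢ` into its integer and
fractional part gives `p = g + q` with `g` in the monoid generated by `P̃ ∩ ℤ^{N+1}` and
`q ∈ Box(S)`; the point `q` is either in that monoid too or a hole. So the finitely many lattice
points of `C(P)` of degree at most `max(μ_hole, 1)` generate `C(P) ∩ ℤ^{N+1}`, and by minimality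
the Hilbert basis is among them.
-/

open scoped BigOperators Pointwise

open Finset Function

section Barycentric

variable {k E ι : Type*} [AddCommGroup E] [Fintype ι]

theorem sum_smul_update_eq [Ring k] [Module k E] [DecidableEq ι] {v : ι → E} {μ : ι → k} {u : E}
    (hu : ∑ i, μ i • v i = u) (j : ι) (a : ι → k) :
    ∑ i, a i • update v j u i = ∑ i, (a + a j • (μ - Pi.single j 1) : ι → k) i • v i := by
  have hupd : (fun i => a i • update v j u i) = update (fun i => a i • v i) j (a j • u) := by
    funext i; rcases eq_or_ne i j with rfl | hij <;> simp [*]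
  have hsingle : ∑ i, (Pi.single j 1 : ι → k) i • v i = v j := by simp
  rw [hupd, sum_update_of_mem (mem_univ j), sdiff_singleton_eq_erase]
  simp only [Pi.add_apply, Pi.smul_apply, Pi.sub_apply, smul_eq_mul, add_smul, sub_smul, mul_smul,
    sum_add_distrib, sum_sub_distrib, ← smul_sum]
  rw [hu, hsingle, smul_sub, ← add_sum_erase _ _ (mem_univ j)]
  abel

theorem AffineIndependent.update_of_apply_ne_zero [DivisionRing k] [Module k E] [DecidableEq ι]
    {v : ι → E} (hv : AffineIndependent k v) {μ : ι → k} (hμ1 : ∑ i, μ i = 1) {u : E}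
    (hu : ∑ i, μ i • v i = u) {j : ι} (hμj : μ j ≠ 0) :
    AffineIndependent k (update v j u) := by
  refine hv.affineIndependent_update_of_notMem_affineSpan fun hmem => hμj ?_
  rw [← hu, ← affineCombination_eq_linear_combination _ _ _ hμ1] at hmem
  exact hv.eq_zero_of_affineCombination_mem_affineSpan hμ1 hmem (mem_univ j) (by simp)

theorem AffineIndependent.snoc [DivisionRing k] [Module k E] {n : ℕ} {v : Fin n → E}
    (hv : AffineIndependent k v) {u : E} (hu : u ∉ affineSpan k (Set.range v)) :
    AffineIndependent k (Fin.snoc v u : Fin (n + 1) → E) := by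
  refine AffineIndependent.affineIndependent_of_notMem_span (i := Fin.last n) ?_ ?_
  · rw [← affineIndependent_equiv (finSuccAboveEquiv (Fin.last n))]
    simpa [Function.comp_def, finSuccAboveEquiv_apply] using hv
  · have himage : (Fin.snoc v u : Fin (n + 1) → E) '' {x | x ≠ Fin.last n} = Set.range v := by
      ext x
      constructor
      · rintro ⟨i, hi, rfl⟩
        obtain ⟨j, rfl⟩ := Fin.exists_castSucc_eq.2 hi
        simp
      · rintro ⟨j, rfl⟩
        exact ⟨j.castSucc, Fin.castSucc_ne_last j, by simp⟩
    simpa [himage] using hu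

variable [Field k] [LinearOrder k] [IsStrictOrderedRing k] [Module k E]

theorem mem_convexHull_range_iff_exists_sum {v : ι → E} {y : E} :
    y ∈ convexHull k (Set.range v) ↔
      ∃ t : ι → k, (∀ i, 0 ≤ t i) ∧ ∑ i, t i = 1 ∧ ∑ i, t i • v i = y := by
  classical
  refine ⟨fun hy => ?_, fun ⟨t, ht0, ht1, hty⟩ =>
    mem_convexHull_of_exists_fintype t v ht0 ht1 (Set.mem_range_self ·) hty⟩
  rw [convexHull_range_eq_exists_affineCombination] at hy
  obtain ⟨s, w, hw0, hw1, rfl⟩ := hy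
  refine ⟨Set.indicator s w, fun i => Set.indicator_nonneg hw0 i, ?_, ?_⟩
  · rw [sum_indicator_subset _ (subset_univ s), hw1]
  · simp_rw [affineCombination_eq_linear_combination _ _ _ hw1, ← Set.indicator_smul_apply_left]
    exact sum_indicator_subset (fun i => w i • v i) (subset_univ s)

theorem eq_pi_single_of_apply_eq_one [DecidableEq ι] {μ : ι → k} (hμ0 : ∀ i, 0 ≤ μ i)
    (hμ1 : ∑ i, μ i = 1) {j : ι} (hj : μ j = 1) : μ = Pi.single j 1 := by
  funext i
  rcases eq_or_ne i j with rfl | hij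
  · simp [hj]
  · have := add_le_sum (fun i _ => hμ0 i) (mem_univ i) (mem_univ j) hij
    rw [Pi.single_eq_of_ne hij]
    linarith [hμ0 i]

variable [DecidableEq ι] {v : ι → E} {μ t : ι → k} {u y : E}

theorem mem_convexHull_update (hμ0 : ∀ i, 0 ≤ μ i) (hμ1 : ∑ i, μ i = 1)
    (hu : ∑ i, μ i • v i = u) (ht0 : ∀ i, 0 ≤ t i) (ht1 : ∑ i, t i = 1)
    (hty : ∑ i, t i • v i = y) {j : ι} (hμj : 0 < μ j)
    (hmin : ∀ i, 0 < μ i → t j / μ j ≤ t i / μ i) :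
    y ∈ convexHull k (Set.range (update v j u)) := by
  set c := t j / μ j
  have hcμ : c * μ j = t j := div_mul_cancel₀ _ hμj.ne'
  set t' : ι → k := t - c • μ + Pi.single j c
  have ht'j : t' j = c := by simp [t', hcμ]
  refine mem_convexHull_range_iff_exists_sum.2 ⟨t', fun i => ?_, ?_, ?_⟩
  · rcases eq_or_ne i j with rfl | hij
    · exact ht'j ▸ div_nonneg (ht0 i) hμj.le
    · simp only [t', Pi.add_apply, Pi.sub_apply, Pi.smul_apply, smul_eq_mul,
        Pi.single_eq_of_ne hij, add_zero, sub_nonneg]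
      rcases (hμ0 i).eq_or_lt with hμi | hμi
      · simp [← hμi, ht0 i]
      · exact (le_div_iff₀ hμi).1 (hmin i hμi)
  · simp [t', sum_add_distrib, sum_sub_distrib, ← mul_sum, ht1, hμ1]
  · have hcoord : t' + t' j • (μ - Pi.single j 1) = t := by
      rw [ht'j]
      ext i
      rcases eq_or_ne i j with rfl | hij
      · simp only [Pi.add_apply, ht'j, Pi.smul_apply, Pi.sub_apply, Pi.single_eq_same, smul_eq_mul]
        linear_combination hcμ
      · simp [t', hij]
    rw [sum_smul_update_eq hu, hcoord, hty]

theorem notMem_convexHull_update (hv : AffineIndependent k v) (hμ1 : ∑ i, μ i = 1)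
    (hu : ∑ i, μ i • v i = u) {j : ι} (hμj : μ j < 1) :
    v j ∉ convexHull k (Set.range (update v j u)) := by
  rw [mem_convexHull_range_iff_exists_sum]
  rintro ⟨s, hs0, hs1, hsv⟩
  have hsingle : ∑ i, (Pi.single j 1 : ι → k) i • v i = v j := by simp
  rw [sum_smul_update_eq hu, ← hsingle] at hsv
  have hcoord := hv.eq_of_sum_eq_sum (s := univ) (by simp [sum_add_distrib, sum_sub_distrib,
    ← mul_sum, hs1, hμ1]) hsv j (mem_univ j)
  have hsj : s j ≤ 1 := hs1 ▸ single_le_sum (fun i _ => hs0 i) (mem_univ j)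
  simp only [Pi.add_apply, Pi.smul_apply, Pi.sub_apply, Pi.single_eq_same, smul_eq_mul] at hcoord
  nlinarith [mul_nonneg (hs0 j) (sub_nonneg.2 hμj.le)]

theorem AffineIndependent.exists_update_mem_convexHull (hv : AffineIndependent k v)
    (hu : u ∈ convexHull k (Set.range v)) (huv : u ∉ Set.range v)
    (hy : y ∈ convexHull k (Set.range v)) :
    ∃ j, AffineIndependent k (update v j u) ∧ y ∈ convexHull k (Set.range (update v j u)) ∧
      v j ∉ convexHull k (Set.range (update v j u)) := by
  obtain ⟨μ, hμ0, hμ1, hμu⟩ := mem_convexHull_range_iff_exists_sum.1 hu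
  obtain ⟨t, ht0, ht1, hty⟩ := mem_convexHull_range_iff_exists_sum.1 hy
  have hpos : (univ.filter (0 < μ ·)).Nonempty := by
    obtain ⟨i, -, hi⟩ := exists_lt_of_sum_lt (s := univ) (f := 0) (g := μ) (by simp [hμ1])
    exact ⟨i, mem_filter.2 ⟨mem_univ i, hi⟩⟩
  -- As in the simplex method, this ratio test keeps the coordinates of `y` nonnegative.
  obtain ⟨j, hj, hmin⟩ := exists_min_image _ (fun i => t i / μ i) hpos
  have hμj : 0 < μ j := (mem_filter.1 hj).2
  have hμj1 : μ j < 1 := by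
    refine (hμ1 ▸ single_le_sum (fun i _ => hμ0 i) (mem_univ j)).lt_of_ne fun h => huv ⟨j, ?_⟩
    rw [← hμu, eq_pi_single_of_apply_eq_one hμ0 hμ1 h, Fintype.sum_single_smul, one_smul]
  exact ⟨j, hv.update_of_apply_ne_zero hμ1 hμu hμj.ne',
    mem_convexHull_update hμ0 hμ1 hμu ht0 ht1 hty hμj
      (fun i hi => hmin i (mem_filter.2 ⟨mem_univ i, hi⟩)),
    notMem_convexHull_update hv hμ1 hμu hμj1⟩

end Barycentric

section Polytope

variable {N : ℕ}

def latticeSubgroup (N : ℕ) : AddSubgroup (Pt N) :=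
  AddSubgroup.pi Set.univ fun _ => (Int.castAddHom ℝ).range

theorem mem_latticeSubgroup {x : Pt N} : x ∈ latticeSubgroup N ↔ IsLat x := by
  simp only [latticeSubgroup, AddSubgroup.mem_pi, Set.mem_univ, true_implies,
    AddMonoidHom.mem_range, Int.coe_castAddHom, IsLat, eq_comm]

theorem latPts_mono {S T : Set (Pt N)} (h : S ⊆ T) : latPts S ⊆ latPts T :=
  fun _ hx => ⟨h hx.1, hx.2⟩

theorem Bornology.IsBounded.finite_latPts {S : Set (Pt N)} (hS : Bornology.IsBounded S) :
    (latPts S).Finite := by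
  obtain ⟨R, hR⟩ := hS.subset_closedBall 0
  refine (Set.Finite.pi fun _ => (Set.finite_Icc (-⌈R⌉) ⌈R⌉).image ((↑) : ℤ → ℝ)).subset ?_
  rintro x ⟨hxS, hx⟩ i -
  obtain ⟨z, hz⟩ := hx i
  have hzR : |(z : ℝ)| ≤ ⌈R⌉ := hz ▸ (norm_le_pi_norm x i).trans
    ((mem_closedBall_zero_iff.1 (hR hxS)).trans (Int.le_ceil R))
  exact ⟨z, abs_le.1 (by exact_mod_cast hzR), hz.symm⟩

theorem IsIntegralPolytope.convex {P : Set (Pt N)} (hP : IsIntegralPolytope P) : Convex ℝ P := by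
  obtain ⟨V, -, rfl⟩ := hP
  exact convex_convexHull ℝ _

theorem IsIntegralPolytope.isBounded {P : Set (Pt N)} (hP : IsIntegralPolytope P) :
    Bornology.IsBounded P := by
  obtain ⟨V, -, rfl⟩ := hP
  exact isBounded_convexHull.2 V.finite_toSet.isBounded

theorem IsIntegralPolytope.affineSpan_latPts {P : Set (Pt N)} (hP : IsIntegralPolytope P) :
    affineSpan ℝ (latPts P) = affineSpan ℝ P := by
  obtain ⟨V, hV, rfl⟩ := hP
  refine le_antisymm (affineSpan_mono ℝ fun _ hx => hx.1) ?_
  rw [affineSpan_convexHull]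
  exact affineSpan_mono ℝ fun x hx => ⟨subset_convexHull ℝ _ hx, hV x hx⟩

theorem AffineIndependent.le_polyDim {P : Set (Pt N)} {m : ℕ} {w : Fin (m + 1) → Pt N}
    (hw : AffineIndependent ℝ w) (hwP : Set.range w ⊆ P) : m ≤ polyDim P := by
  rw [← hw.finrank_vectorSpan (Fintype.card_fin _), polyDim, direction_affineSpan]
  exact Submodule.finrank_mono (vectorSpan_mono ℝ hwP)

theorem IsIntegralPolytope.polyDim_le_of_latPts_subset_affineSpan {P : Set (Pt N)}
    (hP : IsIntegralPolytope P) {m : ℕ} (w : Fin (m + 1) → Pt N) (h : latPts P ⊆ affineSpan ℝ (Set.range w)) : polyDim P ≤ m :=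
  calc polyDim P ≤ Module.finrank ℝ (vectorSpan ℝ (Set.range w)) := by
        rw [polyDim, ← direction_affineSpan, ← hP.affineSpan_latPts]
        exact Submodule.finrank_mono (AffineSubspace.direction_le (affineSpan_le.2 h))
    _ ≤ m := finrank_vectorSpan_range_le ℝ w (Fintype.card_fin _)

theorem IsIntegralPolytope.exists_simplex_superset {P : Set (Pt N)} (hP : IsIntegralPolytope P)
    {m : ℕ} (hm : m ≤ polyDim P) (w : Fin (m + 1) → Pt N) (hw : ∀ i, w i ∈ latPts P)
    (hwi : AffineIndependent ℝ w) :
    ∃ v : Fin (polyDim P + 1) → Pt N,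
      (∀ i, v i ∈ latPts P) ∧ AffineIndependent ℝ v ∧ Set.range w ⊆ Set.range v := by
  induction hm using Nat.decreasingInduction with
  | self => exact ⟨w, hw, hwi, subset_rfl⟩
  | of_succ m hm ih =>
    obtain ⟨u, hu, hus⟩ : ∃ u ∈ latPts P, u ∉ affineSpan ℝ (Set.range w) := by
      by_contra! h
      exact (hP.polyDim_le_of_latPts_subset_affineSpan w h).not_gt hm
    have hsnoc : ∀ i, (Fin.snoc w u : Fin (m + 2) → Pt N) i ∈ latPts P :=
      Fin.lastCases (by simpa using hu) (by simpa using hw)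
    obtain ⟨v, hv, hvi, hrange⟩ := ih _ hsnoc (hwi.snoc hus)
    refine ⟨v, hv, hvi, Set.Subset.trans ?_ hrange⟩
    rintro _ ⟨i, rfl⟩
    exact ⟨i.castSucc, by simp⟩

theorem exists_emptySimplexIn_of_mem_convexHull {P : Set (Pt N)} (hPc : Convex ℝ P)
    (hPfin : (latPts P).Finite) {d : ℕ} {v : Fin (d + 1) → Pt N} (hv : ∀ i, v i ∈ latPts P)
    (hvi : AffineIndependent ℝ v) {y : Pt N} (hy : y ∈ convexHull ℝ (Set.range v)) :
    ∃ w, EmptySimplexIn P d w ∧ y ∈ convexHull ℝ (Set.range w) := by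
  induction hn : (latPts (convexHull ℝ (Set.range v))).ncard using Nat.strong_induction_on
    generalizing v with
  | _ n ih =>
    by_cases hempty : ∀ x ∈ convexHull ℝ (Set.range v), IsLat x → x ∈ Set.range v
    · exact ⟨v, ⟨hv, hvi, hempty⟩, hy⟩
    push Not at hempty
    obtain ⟨u, hu, hul, huv⟩ := hempty
    obtain ⟨j, hvi', hy', hvj⟩ := hvi.exists_update_mem_convexHull hu huv hy
    have hvP : convexHull ℝ (Set.range v) ⊆ P :=
      convexHull_min (Set.range_subset_iff.2 fun i => (hv i).1) hPc
    have hsub : convexHull ℝ (Set.range (update v j u)) ⊆ convexHull ℝ (Set.range v) :=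
      convexHull_min (Set.range_subset_iff.2 <| (forall_update_iff v fun _ x =>
        x ∈ convexHull ℝ (Set.range v)).2 ⟨hu, fun i _ => subset_convexHull ℝ _ ⟨i, rfl⟩⟩)
        (convex_convexHull ℝ _)
    have hv' : ∀ i, update v j u i ∈ latPts P :=
      (forall_update_iff v fun _ x => x ∈ latPts P).2 ⟨⟨hvP hu, hul⟩, fun i _ => hv i⟩
    have hlt : (latPts (convexHull ℝ (Set.range (update v j u)))).ncard < n := by
      refine hn ▸ Set.ncard_lt_ncard ⟨latPts_mono hsub, fun h => hvj ?_⟩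
        (hPfin.subset (latPts_mono hvP))
      exact (h ⟨subset_convexHull ℝ _ ⟨j, rfl⟩, (hv j).2⟩).1
    exact ih _ hlt hv' hvi' hy' rfl

theorem IsIntegralPolytope.exists_emptySimplexIn {P : Set (Pt N)} (hP : IsIntegralPolytope P)
    {y : Pt N} (hy : y ∈ P) :
    ∃ v, EmptySimplexIn P (polyDim P) v ∧ y ∈ convexHull ℝ (Set.range v) := by
  obtain ⟨V, hV, hPV⟩ := id hP
  rw [hPV, convexHull_eq_union] at hy
  simp only [Set.mem_iUnion] at hy
  obtain ⟨t, htV, hti, hyt⟩ := hy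
  obtain ⟨m, htm⟩ : ∃ m, t.card = m + 1 :=
    Nat.exists_eq_succ_of_ne_zero (Finset.card_ne_zero.2 (Finset.nonempty_coe_sort.1
      (convexHull_nonempty_iff.1 ⟨y, hyt⟩).to_subtype))
  set w : Fin (m + 1) → Pt N := (↑) ∘ (t.equivFinOfCardEq htm).symm
  have hwt : Set.range w = t := by
    simp [w, (t.equivFinOfCardEq htm).symm.surjective.range_comp]
  have hw : ∀ i, w i ∈ latPts P := fun i => by
    have hwi : w i ∈ (V : Set (Pt N)) := htV (hwt ▸ Set.mem_range_self i)
    exact ⟨hPV ▸ subset_convexHull ℝ _ hwi, hV _ hwi⟩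
  have hwi : AffineIndependent ℝ w := hti.comp_embedding (t.equivFinOfCardEq htm).symm.toEmbedding
  obtain ⟨v, hv, hvi, hwv⟩ := hP.exists_simplex_superset
    (hwi.le_polyDim (Set.range_subset_iff.2 fun i => (hw i).1)) w hw hwi
  exact exists_emptySimplexIn_of_mem_convexHull hP.convex hP.isBounded.finite_latPts hv hvi
    (convexHull_mono hwv (hwt ▸ hyt))

end Polytope

section Cone

variable {N : ℕ} {P : Set (Pt N)}

/-- `P̃ ∩ ℤ^{N+1}`, the generators of `genMonoid P`. -/
def degOneLatPts (P : Set (Pt N)) : Set (Pt N × ℝ) :=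
  (fun x => (x, 1)) '' latPts P

theorem mk_one_mem_degOneLatPts {x : Pt N} (hx : x ∈ latPts P) : (x, 1) ∈ degOneLatPts P :=
  Set.mem_image_of_mem _ hx

theorem degOneLatPts_subset_coneLat : degOneLatPts P ⊆ coneLat P := by
  rintro _ ⟨x, hx, rfl⟩
  exact ⟨⟨1, 1, fun _ => x, fun _ => ⟨zero_le_one, hx.1⟩, by simp, by simp⟩, hx.2, 1, by simp⟩

theorem genMonoid_subset_closure : genMonoid P ⊆ AddSubmonoid.closure (degOneLatPts P) := by
  rintro p ⟨m, f, hf, h1, h2⟩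
  have hp : p = ∑ i, (f i, (1 : ℝ)) :=
    Prod.ext (by simp [h1, Prod.fst_sum]) (by simp [h2, Prod.snd_sum])
  exact hp ▸ sum_mem fun i _ => AddSubmonoid.subset_closure (mk_one_mem_degOneLatPts (hf i))

theorem boxSimplex_subset_coneLat {d : ℕ} {v : Fin (d + 1) → Pt N} (hv : ∀ i, v i ∈ P) :
    boxSimplex v ⊆ coneLat P := by
  rintro p ⟨r, hr, h1, h2, hlat, hint⟩
  exact ⟨⟨d + 1, r, v, fun i => ⟨(hr i).1, hv i⟩, h1, h2⟩, hlat, hint⟩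

theorem eq_zero_or_of_mem_coneLat (hP : Convex ℝ P) {p : Pt N × ℝ} (hp : p ∈ coneLat P) :
    p = 0 ∨ 0 < p.2 ∧ ∃ y ∈ P, p.1 = p.2 • y := by
  obtain ⟨⟨m, c, w, hcw, h1, h2⟩, -⟩ := hp
  rcases (h2 ▸ sum_nonneg fun i _ => (hcw i).1 : 0 ≤ p.2).eq_or_lt with h0 | hpos
  · have hc : ∀ i, c i = 0 := fun i =>
      (sum_eq_zero_iff_of_nonneg fun i _ => (hcw i).1).1 (h2 ▸ h0.symm) i (mem_univ i)
    exact Or.inl (Prod.ext (by simp [h1, hc]) h0.symm)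
  refine Or.inr ⟨hpos, p.2⁻¹ • p.1, ?_, by rw [smul_smul, mul_inv_cancel₀ hpos.ne', one_smul]⟩
  rw [h1, smul_sum]
  simp_rw [smul_smul]
  exact hP.sum_mem (fun i _ => mul_nonneg (inv_nonneg.2 hpos.le) (hcw i).1)
    (by rw [← mul_sum, ← h2, inv_mul_cancel₀ hpos.ne']) fun i _ => (hcw i).2

theorem finite_coneLat_snd_le (hPc : Convex ℝ P) (hPb : Bornology.IsBounded P) (D : ℝ) :
    {p ∈ coneLat P | p.2 ≤ D}.Finite := by
  obtain ⟨R, hR0, hR⟩ := hPb.subset_closedBall_lt 0 0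
  refine (((Metric.isBounded_closedBall (x := (0 : Pt N)) (r := D * R)).finite_latPts).prod
    ((Set.finite_Icc 0 ⌊D⌋).image ((↑) : ℤ → ℝ))).subset ?_
  rintro p ⟨hp, hpD⟩
  obtain ⟨-, hlat, z, hz⟩ := id hp
  have hdeg : 0 ≤ p.2 ∧ ‖p.1‖ ≤ D * R := by
    rcases eq_zero_or_of_mem_coneLat hPc hp with rfl | ⟨hpos, y, hy, hpy⟩
    · simpa using mul_nonneg hpD hR0.le
    refine ⟨hpos.le, ?_⟩
    rw [hpy, norm_smul, Real.norm_of_nonneg hpos.le]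
    exact mul_le_mul hpD (mem_closedBall_zero_iff.1 (hR hy)) (norm_nonneg _) (hpos.le.trans hpD)
  refine ⟨⟨mem_closedBall_zero_iff.2 hdeg.2, hlat⟩, z, ⟨?_, Int.le_floor.2 (hz ▸ hpD)⟩, hz.symm⟩
  exact_mod_cast hz ▸ hdeg.1

theorem exists_mem_boxSimplex_sub_mem_closure {d : ℕ} {v : Fin (d + 1) → Pt N}
    (hv : ∀ i, v i ∈ latPts P) {p : Pt N × ℝ} (hlat : IsLat p.1) (hint : ∃ z : ℤ, p.2 = z)
    {c : Fin (d + 1) → ℝ} (hc : ∀ i, 0 ≤ c i) (h1 : p.1 = ∑ i, c i • v i) (h2 : p.2 = ∑ i, c i) :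
    ∃ q ∈ boxSimplex v, p - q ∈ AddSubmonoid.closure (degOneLatPts P) := by
  set g : Pt N × ℝ := ∑ i, ⌊c i⌋₊ • (v i, (1 : ℝ))
  have hg : g ∈ AddSubmonoid.closure (degOneLatPts P) :=
    sum_mem fun i _ => nsmul_mem (AddSubmonoid.subset_closure (mk_one_mem_degOneLatPts (hv i))) _
  have hg1 : g.1 = ∑ i, (⌊c i⌋₊ : ℝ) • v i := by simp [g, Prod.fst_sum, Nat.cast_smul_eq_nsmul]
  have hg2 : g.2 = ∑ i, (⌊c i⌋₊ : ℝ) := by simp [g, Prod.snd_sum]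
  refine ⟨p - g, ⟨fun i => c i - ⌊c i⌋₊, ?_, ?_, ?_, ?_, ?_⟩, by simpa using hg⟩
  · exact fun i => ⟨sub_nonneg.2 (Nat.floor_le (hc i)), by linarith [Nat.lt_floor_add_one (c i)]⟩
  · simp [hg1, h1, sub_smul, sum_sub_distrib]
  · simp [hg2, h2, sum_sub_distrib]
  · rw [Prod.fst_sub, ← mem_latticeSubgroup]
    refine sub_mem (mem_latticeSubgroup.2 hlat) (hg1 ▸ sum_mem fun i _ => ?_)
    rw [Nat.cast_smul_eq_nsmul]
    exact nsmul_mem (mem_latticeSubgroup.2 (hv i).2) _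
  · obtain ⟨z, hz⟩ := hint
    exact ⟨z - ∑ i, (⌊c i⌋₊ : ℤ), by simp [hz, hg2]⟩

theorem IsIntegralPolytope.coneLat_subset_closure (hP : IsIntegralPolytope P) {D : ℝ}
    (hD : 1 ≤ D) (hbox : ∀ q ∈ boxP P (polyDim P), q.2 ≤ D) :
    coneLat P ⊆ AddSubmonoid.closure {p ∈ coneLat P | p.2 ≤ D} := by
  have hdeg1 :
      AddSubmonoid.closure (degOneLatPts P) ≤ AddSubmonoid.closure {p ∈ coneLat P | p.2 ≤ D} :=
    AddSubmonoid.closure_mono fun p hp => ⟨degOneLatPts_subset_coneLat hp, by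
      obtain ⟨x, -, rfl⟩ := hp
      exact hD⟩
  intro p hp
  rcases eq_zero_or_of_mem_coneLat hP.convex hp with rfl | ⟨hpos, y, hy, hpy⟩
  · exact zero_mem _
  obtain ⟨v, hv, hyv⟩ := hP.exists_emptySimplexIn hy
  obtain ⟨t, ht0, ht1, hty⟩ := mem_convexHull_range_iff_exists_sum.1 hyv
  obtain ⟨q, hq, hpq⟩ := exists_mem_boxSimplex_sub_mem_closure hv.1 hp.2.1 hp.2.2
    (c := fun i => p.2 * t i) (fun i => mul_nonneg hpos.le (ht0 i))
    (by simp_rw [hpy, ← hty, smul_sum, smul_smul]) (by rw [← mul_sum, ht1, mul_one])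
  rw [← sub_add_cancel p q]
  refine add_mem (hdeg1 hpq) ?_
  by_cases hqg : q ∈ genMonoid P
  · exact hdeg1 (genMonoid_subset_closure hqg)
  · exact AddSubmonoid.subset_closure ⟨boxSimplex_subset_coneLat (fun i => (hv.1 i).1) hq,
      hbox q ⟨Set.mem_biUnion hv hq, hqg⟩⟩

end Cone

/-- `μ_Hilb(P) ≤ max (μ_hole(P), 1)`: every element of the minimal
Hilbert basis has degree at most the maximum of `1` and a bound on the degrees of holes. -/
theorem hilb_le_hole {N : ℕ} (P : Set (Pt N))
    (hP : IsIntegralPolytope P)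
    (H : Set (Pt N × ℝ)) (hH : IsMinHilbertBasis P H)
    (M : ℕ) (hM : ∀ p ∈ boxP P (polyDim P), p.2 ≤ (M : ℝ)) :
    ∀ p ∈ H, p.2 ≤ max (M : ℝ) 1 := by
  have hgen := hP.coneLat_subset_closure (le_max_right (M : ℝ) 1)
    fun q hq => (hM q hq).trans (le_max_left _ _)
  intro p hp
  exact (hH.2 _ ⟨finite_coneLat_snd_le hP.convex hP.isBounded _, fun _ hq => hq.1, hgen⟩ hp).2
end
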